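/- Let M(Σ,Ω) = (1 - vΣ)² Ω_V^{a-1} Ω^{-a} with v = √(3/2)γ/λ and a = 2(λ²-3γ)/(2λ²-3γ²), where γ ∈ (0,2), λ² > 3γ. Then along interior solutions (Ω_V > 0, Ω > 0) of the system, M' = -[3(2-γ)(Σ-v)²/((1-v²)(1-vΣ))]·M ≤ 0, with equality only when Σ = v. -/

import Mathlib

/-!
Writing `M = f^2 g^(a-1) h^(-a)` with `f = 1 - vΣ`, `g = Ω_V`, `h = Ω`, one has
`M'/M = 2f'/f + (a-1)g'/g - a h'/h`, a rational function of `(Σ, Ω)`. Substituting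
`√(3/2)λ = 3γ/(2v)` and `a = (γ - 2v²)/(γ(1 - v²))` collapses it to
`-3(2-γ)(Σ-v)²/((1-v²)(1-vΣ))`; in the interior `0 < v < 1` and `|Σ| < 1`, so `1 - vΣ > 0`
and `M > 0`, which gives the sign and the equality case.
-/

noncomputable section

/-- The deceleration parameter `q`; `sigmaRate` and `omegaRate` are the right-hand sides of
the equations for `Σ'` and `Ω'`. -/
def decel (gam s o : ℝ) : ℝ := -1 + 3 * s ^ 2 + 3 / 2 * gam * o

def sigmaRate (lam gam s o : ℝ) : ℝ :=
  -(2 - decel gam s o) * s + Real.sqrt (3 / 2) * lam * (1 - s ^ 2 - o)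

def omegaRate (gam s o : ℝ) : ℝ := (2 * (1 + decel gam s o) - 3 * gam) * o

end

theorem HasDerivAt.pow_mul_rpow_mul_rpow {f g h : ℝ → ℝ} {f' g' h' b c x : ℝ} (n : ℕ)
    (hf : HasDerivAt f f' x) (hg : HasDerivAt g g' x) (hh : HasDerivAt h h' x)
    (hf0 : f x ≠ 0) (hg0 : g x ≠ 0) (hh0 : h x ≠ 0) :
    HasDerivAt (fun y => f y ^ n * g y ^ b * h y ^ c)
      ((n * f' / f x + b * g' / g x + c * h' / h x) * (f x ^ n * g x ^ b * h x ^ c)) x := by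
  refine (((hf.pow n).mul (hg.rpow_const (Or.inl hg0))).mul
    (hh.rpow_const (Or.inl hh0))).congr_deriv ?_
  simp only [Pi.mul_apply, Pi.pow_apply]
  rw [Real.rpow_sub_one hg0, Real.rpow_sub_one hh0]
  rcases n with _ | n
  · simp only [pow_zero, CharP.cast_eq_zero, zero_mul, zero_div, zero_add, one_mul]
    field_simp
  · simp only [Nat.add_sub_cancel, pow_succ]
    field_simp

section Parameters

variable {lam gam v a : ℝ}

theorem v_pos_and_sq_lt_one (hl : 0 < lam) (hg : 0 < gam) (hg2 : gam < 2)
    (hlg : 3 * gam < lam ^ 2) (hv : v = Real.sqrt (3 / 2) * (gam / lam)) :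
    0 < v ∧ v ^ 2 < 1 := by
  have hsq : Real.sqrt (3 / 2) ^ 2 = 3 / 2 := Real.sq_sqrt (by norm_num)
  refine ⟨by rw [hv]; positivity, ?_⟩
  rw [hv, mul_pow, hsq, div_pow, mul_div_assoc', div_lt_one (by positivity)]
  nlinarith

theorem sqrt_mul_lam_eq (hl : 0 < lam) (hg : 0 < gam)
    (hv : v = Real.sqrt (3 / 2) * (gam / lam)) :
    Real.sqrt (3 / 2) * lam = 3 * gam / (2 * v) := by
  have hsq : Real.sqrt (3 / 2) ^ 2 = 3 / 2 := Real.sq_sqrt (by norm_num)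
  rw [hv, eq_div_iff (by positivity)]
  field_simp
  rw [hsq]
  ring

theorem exponent_eq (hl : 0 < lam) (hg : 0 < gam) (hv : v = Real.sqrt (3 / 2) * (gam / lam))
    (hv1 : v ^ 2 < 1) (ha : a = 2 * (lam ^ 2 - 3 * gam) / (2 * lam ^ 2 - 3 * gam ^ 2)) :
    a = (gam - 2 * v ^ 2) / (gam * (1 - v ^ 2)) := by
  have hsq : Real.sqrt (3 / 2) ^ 2 = 3 / 2 := Real.sq_sqrt (by norm_num)
  have hv2 : v ^ 2 * lam ^ 2 = 3 / 2 * gam ^ 2 := by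
    rw [hv]; field_simp; rw [hsq]; ring
  have h1 : 0 < 1 - v ^ 2 := by linarith
  have h2 : 2 * lam ^ 2 - 3 * gam ^ 2 ≠ 0 := by nlinarith [mul_pos h1 (pow_pos hl 2)]
  rw [ha, div_eq_div_iff h2 (by positivity)]
  linear_combination (4 - 2 * gam) * hv2

end Parameters

theorem lyapunov_logDeriv_eq {lam gam v a : ℝ} (s o : ℝ) (hv : v ≠ 0) (hg : gam ≠ 0)
    (hv1 : 1 - v ^ 2 ≠ 0) (hvs : 1 - v * s ≠ 0) (hV : 1 - s ^ 2 - o ≠ 0) (ho : o ≠ 0)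
    (hk : Real.sqrt (3 / 2) * lam = 3 * gam / (2 * v))
    (ha : a = (gam - 2 * v ^ 2) / (gam * (1 - v ^ 2))) :
    2 * -(v * sigmaRate lam gam s o) / (1 - v * s)
      + (a - 1) * (-(2 * s * sigmaRate lam gam s o) - omegaRate gam s o) / (1 - s ^ 2 - o)
      + -a * omegaRate gam s o / o
      = -(3 * (2 - gam) * (s - v) ^ 2 / ((1 - v ^ 2) * (1 - v * s))) := by
  unfold sigmaRate omegaRate decel
  rw [hk, ha]
  field_simp
  ring

theorem neg_mul_sq_sub_div_mul_eq_zero_iff {C D M s v : ℝ} (hC : C ≠ 0) (hD : D ≠ 0)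
    (hM : M ≠ 0) : -(C * (s - v) ^ 2 / D) * M = 0 ↔ s = v := by
  simp [hC, hD, hM, sub_eq_zero]

theorem stmt_10 (lam gam v a : ℝ) (hl : 0 < lam) (hg : 0 < gam) (hg2 : gam < 2)
    (hlg : 3 * gam < lam ^ 2)
    (hv : v = Real.sqrt (3 / 2) * (gam / lam))
    (ha : a = 2 * (lam ^ 2 - 3 * gam) / (2 * lam ^ 2 - 3 * gam ^ 2))
    (S O : ℝ → ℝ)
    (hS : ∀ N, HasDerivAt S (-(2 - (-1 + 3 * S N ^ 2 + 3 / 2 * gam * O N)) * S N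
        + Real.sqrt (3 / 2) * lam * (1 - S N ^ 2 - O N)) N)
    (hO : ∀ N, HasDerivAt O
        ((2 * (1 + (-1 + 3 * S N ^ 2 + 3 / 2 * gam * O N)) - 3 * gam) * O N) N)
    (N : ℝ) (hint : S N ^ 2 + O N < 1) (hOp : 0 < O N) :
    HasDerivAt (fun N => (1 - v * S N) ^ 2 * (1 - S N ^ 2 - O N) ^ (a - 1) * O N ^ (-a))
      (-(3 * (2 - gam) * (S N - v) ^ 2 / ((1 - v ^ 2) * (1 - v * S N)))
        * ((1 - v * S N) ^ 2 * (1 - S N ^ 2 - O N) ^ (a - 1) * O N ^ (-a))) N ∧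
    -(3 * (2 - gam) * (S N - v) ^ 2 / ((1 - v ^ 2) * (1 - v * S N)))
        * ((1 - v * S N) ^ 2 * (1 - S N ^ 2 - O N) ^ (a - 1) * O N ^ (-a)) ≤ 0 ∧
    (-(3 * (2 - gam) * (S N - v) ^ 2 / ((1 - v ^ 2) * (1 - v * S N)))
        * ((1 - v * S N) ^ 2 * (1 - S N ^ 2 - O N) ^ (a - 1) * O N ^ (-a)) = 0
      ↔ S N = v) := by
  obtain ⟨hv0, hv1⟩ := v_pos_and_sq_lt_one hl hg hg2 hlg hv
  have hV : 0 < 1 - S N ^ 2 - O N := by linarith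
  have hvs : 0 < 1 - v * S N := by nlinarith [sq_nonneg (v - S N)]
  have hM : 0 < (1 - v * S N) ^ 2 * (1 - S N ^ 2 - O N) ^ (a - 1) * O N ^ (-a) :=
    mul_pos (mul_pos (pow_pos hvs 2) (Real.rpow_pos_of_pos hV _)) (Real.rpow_pos_of_pos hOp _)
  have hD : 0 < (1 - v ^ 2) * (1 - v * S N) := mul_pos (by linarith) hvs
  have hS' : HasDerivAt S (sigmaRate lam gam (S N) (O N)) N := hS N
  have hO' : HasDerivAt O (omegaRate gam (S N) (O N)) N := hO N
  have hdS : HasDerivAt (fun N => 1 - v * S N) (-(v * sigmaRate lam gam (S N) (O N))) N :=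
    (hS'.const_mul v).const_sub 1
  have hdV : HasDerivAt (fun N => 1 - S N ^ 2 - O N)
      (-(2 * S N * sigmaRate lam gam (S N) (O N)) - omegaRate gam (S N) (O N)) N :=
    ((hS'.fun_pow 2).const_sub 1).sub hO' |>.congr_deriv (by ring)
  refine ⟨(hdS.pow_mul_rpow_mul_rpow 2 hdV hO' hvs.ne' hV.ne' hOp.ne').congr_deriv ?_,
    mul_nonpos_of_nonpos_of_nonneg (neg_nonpos.2 (div_nonneg (by positivity) hD.le)) hM.le,
    neg_mul_sq_sub_div_mul_eq_zero_iff (by linarith) hD.ne' hM.ne'⟩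
  rw [Nat.cast_ofNat, lyapunov_logDeriv_eq (S N) (O N) hv0.ne' hg.ne' (by linarith) hvs.ne' hV.ne'
    hOp.ne' (sqrt_mul_lam_eq hl hg hv) (exponent_eq hl hg hv hv1 ha)]
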